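/- Let α ∈ (1/2, 1) with αn ∈ ℕ, let a ≠ b ∈ ℝ^d, and let X = (x_1, …, x_n) with x_1 = … = x_{αn} = a and x_{αn+1} = … = x_n = b. Suppose Ŷ = (ŷ_1, …, ŷ_n) satisfies ŷ_j ∈ {a, b} for every j, with #{j : ŷ_j = a} = n_1 and #{j : ŷ_j = b} = n − n_1. Then Ŷ is a strict local minimum of Y ↦ φ_JS(Y, X); moreover, if n_1 ≠ αn, then Ŷ is a sub-optimal strict local minimum, i.e., φ_JS(Ŷ, X) > −log 2. -/

import Mathlib

open scoped BigOperators

/-- The JS-GAN loss. -/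
noncomputable def phiJS {d n : ℕ} (x Y : Fin n → EuclideanSpace ℝ (Fin d)) : ℝ :=
  sSup {s : ℝ | ∃ D : EuclideanSpace ℝ (Fin d) → ℝ, Continuous D ∧
    (∀ u, D u ∈ Set.Ioo (0 : ℝ) 1) ∧
    s = (1 / (2 * (n : ℝ))) * ∑ i, (Real.log (D (x i)) + Real.log (1 - D (Y i)))}

/-!
For data taking only the two values `a` and `b`, a discriminator matters only through
`p = D a` and `q = D b`, so `φ_JS(Y, X)` is `1 / (2n)` times a sum of two suprema of
Bernoulli log-likelihoods `m log p + l log (1 - p)`, computed by Gibbs' inequality. It exceeds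
`-log 2` (the value at `p = q = 1/2`) as soon as the `a`-counts of `X` and `Y` differ.

If `Y'` is close to `Y` but different, some `Y' j` lies off `{a, b}`. Take a near-optimal
discriminator that is constant on small balls around `a` and `b` and whose values stay away
from `0`; lowering it near `Y' j` only (Urysohn) raises the objective at `Y'` by a margin that
does not depend on `Y'`, hence `φ_JS(Y', X) > φ_JS(Y, X)`.
-/

open Real Set

noncomputable def bernoulliLogLik (m l p : ℝ) : ℝ := m * log p + l * log (1 - p)

/-- The supremum of `bernoulliLogLik m l` over `(0, 1)`. For `l = 0` the maximiser `1` lies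
outside `(0, 1)`, and the value `0` is only approached. -/
noncomputable def maxBernoulliLogLik (m l : ℝ) : ℝ := bernoulliLogLik m l (m / (m + l))

section Bernoulli

variable {m l p : ℝ}

theorem bernoulliLogLik_lt_max (hm : 0 < m) (hl : 0 ≤ l) (hp : p ∈ Ioo 0 1)
    (hne : p ≠ m / (m + l)) : bernoulliLogLik m l p < maxBernoulliLogLik m l := by
  obtain ⟨hp0, hp1⟩ := hp
  unfold maxBernoulliLogLik bernoulliLogLik
  rcases hl.eq_or_lt with rfl | hl
  · simp [hm.ne', mul_neg_of_pos_of_neg hm (log_neg hp0 hp1)]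
  have hml : 0 < m + l := by linarith
  have hopt : 1 - m / (m + l) = l / (m + l) := by field_simp; ring
  rw [hopt]
  -- Gibbs' inequality: `log x ≤ x - 1` at both likelihood ratios, and the right sides add to `0`
  have h1 : log (p / (m / (m + l))) < p / (m / (m + l)) - 1 :=
    log_lt_sub_one_of_pos (by positivity) (by rwa [ne_eq, div_eq_one_iff_eq (by positivity)])
  have h2 : log ((1 - p) / (l / (m + l))) ≤ (1 - p) / (l / (m + l)) - 1 :=
    log_le_sub_one_of_pos (div_pos (by linarith) (by positivity))
  rw [log_div hp0.ne' (by positivity)] at h1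
  rw [log_div (by linarith) (by positivity)] at h2
  have e1 : m * (p / (m / (m + l)) - 1) = p * (m + l) - m := by field_simp
  have e2 : l * ((1 - p) / (l / (m + l)) - 1) = (1 - p) * (m + l) - l := by field_simp
  nlinarith [mul_lt_mul_of_pos_left h1 hm, mul_le_mul_of_nonneg_left h2 hl.le]

theorem bernoulliLogLik_le_max (hm : 0 < m) (hl : 0 ≤ l) (hp : p ∈ Ioo 0 1) :
    bernoulliLogLik m l p ≤ maxBernoulliLogLik m l := by
  rcases eq_or_ne p (m / (m + l)) with rfl | hne
  · rfl
  · exact (bernoulliLogLik_lt_max hm hl hp hne).le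

theorem exists_bernoulliLogLik_gt (hm : 0 < m) (hl : 0 ≤ l) {η : ℝ} (hη : 0 < η) :
    ∃ p ∈ Ico (m / (m + l) / 2) 1, maxBernoulliLogLik m l - η < bernoulliLogLik m l p := by
  set p₀ := m / (m + l)
  have hp₀ : 0 < p₀ := by positivity
  have hp₀1 : p₀ ≤ 1 := div_le_one_of_le₀ (by linarith) (by positivity)
  have hcont : ContinuousAt (bernoulliLogLik m l) p₀ := by
    unfold bernoulliLogLik
    refine (continuousAt_const.mul (continuousAt_log hp₀.ne')).add ?_
    rcases hl.eq_or_lt with rfl | hl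
    · simpa using continuousAt_const
    · have : p₀ < 1 := (div_lt_one (by linarith)).2 (by linarith)
      exact continuousAt_const.mul (ContinuousAt.log (by fun_prop) (by linarith))
  have hnear : ∀ᶠ p in nhdsWithin p₀ (Iio p₀),
      p ∈ Ico (p₀ / 2) 1 ∧ maxBernoulliLogLik m l - η < bernoulliLogLik m l p := by
    have hIoo : ∀ᶠ p in nhdsWithin p₀ (Iio p₀), p ∈ Ioo (p₀ / 2) p₀ :=
      Ioo_mem_nhdsLT (by linarith)
    filter_upwards [hIoo, nhdsWithin_le_nhds (hcont.eventually (lt_mem_nhds (sub_lt_self _ hη)))]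
      with p hp hlt
    exact ⟨⟨hp.1.le, by linarith [hp.2]⟩, hlt⟩
  exact hnear.exists

end Bernoulli

theorem sub_le_log_one_sub_sub_log_one_sub {s t : ℝ} (hs : 0 ≤ s) (hst : s ≤ t) (ht : t < 1) :
    t - s ≤ log (1 - s) - log (1 - t) := by
  have hs1 : 0 < 1 - s := by linarith
  have h := log_le_sub_one_of_pos (div_pos (by linarith : 0 < 1 - t) hs1)
  rw [log_div (by linarith) hs1.ne'] at h
  have : (1 - t) / (1 - s) - 1 ≤ s - t := by
    rw [div_sub_one hs1.ne', div_le_iff₀ hs1]; nlinarith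
  linarith

theorem sum_comp_eq_ncard_mul_add_ncard_mul {ι E : Type*} [Fintype ι] {Z : ι → E} {a b : E}
    (hab : a ≠ b) (hZ : ∀ i, Z i = a ∨ Z i = b) (f : E → ℝ) :
    ∑ i, f (Z i) = {i | Z i = a}.ncard * f a + {i | Z i = b}.ncard * f b := by
  classical
  have hf : ∀ i, f (Z i) = if Z i = a then f a else f b := fun i => by
    rcases hZ i with h | h <;> simp [h, hab.symm]
  have hb : ∀ i, ¬Z i = a ↔ Z i = b := fun i => by
    rcases hZ i with h | h <;> simp [h, hab, hab.symm]
  simp only [hf, Finset.sum_ite, Finset.sum_const, nsmul_eq_mul, hb, Set.ncard_eq_toFinset_card',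
    Set.toFinset_ofPred]

theorem sum_log_eq_bernoulliLogLik {ι E : Type*} [Fintype ι] {x Y : ι → E} {a b : E}
    (hab : a ≠ b) (hx : ∀ i, x i = a ∨ x i = b)
    (hY : ∀ i, Y i = a ∨ Y i = b) (D : E → ℝ) :
    ∑ i, (log (D (x i)) + log (1 - D (Y i))) =
      bernoulliLogLik {i | x i = a}.ncard {i | Y i = a}.ncard (D a) +
        bernoulliLogLik {i | x i = b}.ncard {i | Y i = b}.ncard (D b) := by
  rw [Finset.sum_add_distrib, sum_comp_eq_ncard_mul_add_ncard_mul hab hx (fun u => log (D u)),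
    sum_comp_eq_ncard_mul_add_ncard_mul hab hY (fun u => log (1 - D u))]
  unfold bernoulliLogLik
  ring

theorem exists_continuous_eqOn_closedBall {E : Type*} [MetricSpace E] {a b : E} (hab : a ≠ b)
    (p q : ℝ) :
    ∃ D : E → ℝ, Continuous D ∧ EqOn D (fun _ => p) (Metric.closedBall a (dist a b / 3)) ∧
      EqOn D (fun _ => q) (Metric.closedBall b (dist a b / 3)) ∧
      ∀ u, D u ∈ Icc (min p q) (max p q) := by
  have hdisj : Disjoint (Metric.closedBall a (dist a b / 3)) (Metric.closedBall b (dist a b / 3)) :=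
    Metric.closedBall_disjoint_closedBall (by linarith [dist_pos.2 hab])
  obtain ⟨f, hfa, hfb, hf⟩ :=
    exists_continuous_zero_one_of_isClosed Metric.isClosed_closedBall Metric.isClosed_closedBall
      hdisj
  refine ⟨fun u => p + (q - p) * f u, by fun_prop, fun u hu => ?_, fun u hu => ?_, fun u => ?_⟩
  · simp [hfa hu]
  · simp [hfb hu]
  · obtain ⟨h0, h1⟩ := hf u
    rcases le_total p q with h | h
    · rw [min_eq_left h, max_eq_right h]; constructor <;> nlinarith
    · rw [min_eq_right h, max_eq_left h]; constructor <;> nlinarith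

section Dip

variable {X : Type*} [TopologicalSpace X] [NormalSpace X] [T1Space X]

theorem exists_continuous_eqOn_of_notMem {D₀ : X → ℝ} (hD₀ : Continuous D₀)
    (hD₀0 : ∀ x, 0 ≤ D₀ x) {s : Set X} (hs : IsClosed s) {y : X} (hy : y ∉ s) :
    ∃ D : X → ℝ, Continuous D ∧ EqOn D D₀ s ∧ D y = D₀ y / 2 ∧
      ∀ x, D x ∈ Icc (D₀ x / 2) (D₀ x) := by
  obtain ⟨g, hgs, hgy, hg⟩ :=
    exists_continuous_zero_one_of_isClosed hs isClosed_singleton (disjoint_singleton_right.2 hy)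
  refine ⟨fun x => D₀ x * (1 - g x / 2), by fun_prop, fun x hx => ?_, ?_, fun x => ?_⟩
  · simp [hgs hx]
  · simp [hgy rfl]; ring
  · obtain ⟨h0, h1⟩ := hg x
    constructor <;> nlinarith [hD₀0 x]

theorem exists_sum_log_add_le {ι : Type*} [Fintype ι] {x Y Y' : ι → X} {a b : X}
    (hx : ∀ i, x i = a ∨ x i = b) {D₀ : X → ℝ} (hD₀ : Continuous D₀) {c : ℝ} (hc : 0 < c)
    (hD₀c : ∀ u, c ≤ D₀ u) (hD₀1 : ∀ u, D₀ u < 1) (hD₀Y : ∀ i, D₀ (Y' i) = D₀ (Y i)) {j : ι}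
    (hj : Y' j ∉ ({a, b} : Set X)) :
    ∃ D : X → ℝ, Continuous D ∧ (∀ u, D u ∈ Ioo (0 : ℝ) 1) ∧
      ∑ i, (log (D₀ (x i)) + log (1 - D₀ (Y i))) + c / 2 ≤
        ∑ i, (log (D (x i)) + log (1 - D (Y' i))) := by
  obtain ⟨D, hD, hDab, hDj, hDmem⟩ := exists_continuous_eqOn_of_notMem hD₀
    (fun u => hc.le.trans (hD₀c u)) (Set.toFinite _).isClosed hj
  refine ⟨D, hD, fun u => ⟨by linarith [(hDmem u).1, hD₀c u], (hDmem u).2.trans_lt (hD₀1 u)⟩, ?_⟩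
  have hterm : ∀ i, log (D₀ (x i)) + log (1 - D₀ (Y i)) + (D₀ (Y i) - D (Y' i)) ≤
      log (D (x i)) + log (1 - D (Y' i)) := fun i => by
    rw [hDab (by rcases hx i with h | h <;> simp [h] : x i ∈ ({a, b} : Set X))]
    have := sub_le_log_one_sub_sub_log_one_sub ((hDmem (Y' i)).1.trans' (by linarith [hD₀c (Y' i)]))
      ((hDmem (Y' i)).2.trans (hD₀Y i).le) (hD₀1 (Y i))
    linarith
  have hgain : c / 2 ≤ ∑ i, (D₀ (Y i) - D (Y' i)) :=
    calc c / 2 ≤ D₀ (Y j) - D (Y' j) := by rw [hDj, hD₀Y]; linarith [hD₀c (Y j)]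
      _ ≤ _ := Finset.single_le_sum (f := fun i => D₀ (Y i) - D (Y' i))
          (fun i _ => by linarith [(hDmem (Y' i)).2, hD₀Y i]) (Finset.mem_univ j)
  calc _ ≤ ∑ i, (log (D₀ (x i)) + log (1 - D₀ (Y i))) + ∑ i, (D₀ (Y i) - D (Y' i)) := by
        gcongr
    _ ≤ _ := by rw [← Finset.sum_add_distrib]; exact Finset.sum_le_sum fun i _ => hterm i

end Dip
section JS

variable {d n : ℕ} {x Y : Fin n → EuclideanSpace ℝ (Fin d)}

theorem le_phiJS {D : EuclideanSpace ℝ (Fin d) → ℝ} (hD : Continuous D)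
    (hD01 : ∀ u, D u ∈ Ioo (0 : ℝ) 1) :
    1 / (2 * (n : ℝ)) * ∑ i, (log (D (x i)) + log (1 - D (Y i))) ≤ phiJS x Y := by
  refine le_csSup ⟨0, ?_⟩ ⟨D, hD, hD01, rfl⟩
  rintro s ⟨D', -, hD'01, rfl⟩
  refine mul_nonpos_of_nonneg_of_nonpos (by positivity) (Finset.sum_nonpos fun i _ => ?_)
  have hx := hD'01 (x i)
  have hY := hD'01 (Y i)
  exact add_nonpos (log_nonpos hx.1.le hx.2.le)
    (log_nonpos (by linarith [hY.2]) (by linarith [hY.1]))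

theorem phiJS_le {V : ℝ} (h : ∀ D : EuclideanSpace ℝ (Fin d) → ℝ, Continuous D →
      (∀ u, D u ∈ Ioo (0 : ℝ) 1) →
        1 / (2 * (n : ℝ)) * ∑ i, (log (D (x i)) + log (1 - D (Y i))) ≤ V) :
    phiJS x Y ≤ V := by
  refine csSup_le ⟨_, fun _ => 1 / 2, continuous_const, fun _ => by norm_num, rfl⟩ ?_
  rintro s ⟨D, hD, hD01, rfl⟩
  exact h D hD hD01

variable {a b : EuclideanSpace ℝ (Fin d)}

theorem phiJS_eq (hab : a ≠ b) (hx : ∀ i, x i = a ∨ x i = b) (hY : ∀ i, Y i = a ∨ Y i = b)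
    (hxa : a ∈ range x) (hxb : b ∈ range x) :
    phiJS x Y = 1 / (2 * (n : ℝ)) *
      (maxBernoulliLogLik {i | x i = a}.ncard {i | Y i = a}.ncard +
        maxBernoulliLogLik {i | x i = b}.ncard {i | Y i = b}.ncard) := by
  have hn : (0 : ℝ) < n := Nat.cast_pos.2 hxa.choose.pos
  have hma : (0 : ℝ) < {i | x i = a}.ncard := Nat.cast_pos.2 ((ncard_pos).2 hxa)
  have hmb : (0 : ℝ) < {i | x i = b}.ncard := Nat.cast_pos.2 ((ncard_pos).2 hxb)
  refine le_antisymm (phiJS_le fun D _ hD01 => ?_) (le_of_forall_pos_lt_add fun ε hε => ?_)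
  · rw [sum_log_eq_bernoulliLogLik hab hx hY]
    gcongr
    exacts [bernoulliLogLik_le_max hma (by positivity) (hD01 a),
      bernoulliLogLik_le_max hmb (by positivity) (hD01 b)]
  · obtain ⟨p, hp, hpgt⟩ := exists_bernoulliLogLik_gt hma
      (Nat.cast_nonneg {i | Y i = a}.ncard) (mul_pos hn hε)
    obtain ⟨q, hq, hqgt⟩ := exists_bernoulliLogLik_gt hmb
      (Nat.cast_nonneg {i | Y i = b}.ncard) (mul_pos hn hε)
    have hp0 : 0 < p := lt_of_lt_of_le (by positivity) hp.1
    have hq0 : 0 < q := lt_of_lt_of_le (by positivity) hq.1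
    obtain ⟨D, hD, hDa, hDb, hD01⟩ := exists_continuous_eqOn_closedBall hab p q
    have hr : 0 ≤ dist a b / 3 := by positivity
    calc _ < 1 / (2 * (n : ℝ)) * (bernoulliLogLik {i | x i = a}.ncard {i | Y i = a}.ncard p +
          bernoulliLogLik {i | x i = b}.ncard {i | Y i = b}.ncard q) + ε := by
          field_simp
          linarith
      _ = 1 / (2 * (n : ℝ)) * ∑ i, (log (D (x i)) + log (1 - D (Y i))) + ε := by
          rw [sum_log_eq_bernoulliLogLik hab hx hY, hDa (Metric.mem_closedBall_self hr),
            hDb (Metric.mem_closedBall_self hr)]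
      _ ≤ phiJS x Y + ε := by
          gcongr
          refine le_phiJS hD fun u => ⟨?_, ?_⟩
          · exact lt_of_lt_of_le (lt_min hp0 hq0) (hD01 u).1
          · exact lt_of_le_of_lt (hD01 u).2 (max_lt hp.2 hq.2)

theorem exists_forall_phiJS_lt (hab : a ≠ b) (hx : ∀ i, x i = a ∨ x i = b)
    (hY : ∀ i, Y i = a ∨ Y i = b) (hxa : a ∈ range x) (hxb : b ∈ range x) :
    ∃ ε > 0, ∀ Y' : Fin n → EuclideanSpace ℝ (Fin d), Y' ≠ Y → dist Y' Y < ε →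
      phiJS x Y < phiJS x Y' := by
  set ma : ℝ := ({i | x i = a}.ncard : ℝ)
  set mb : ℝ := ({i | x i = b}.ncard : ℝ)
  set la : ℝ := ({i | Y i = a}.ncard : ℝ)
  set lb : ℝ := ({i | Y i = b}.ncard : ℝ)
  have hma : 0 < ma := Nat.cast_pos.2 ((ncard_pos).2 hxa)
  have hmb : 0 < mb := Nat.cast_pos.2 ((ncard_pos).2 hxb)
  -- the values at `a` and `b` stay above `c`, which makes the gain of the dip uniform
  set c := min (ma / (ma + la)) (mb / (mb + lb)) / 2
  have hc : 0 < c := by positivity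
  obtain ⟨p, hp, hpgt⟩ := exists_bernoulliLogLik_gt hma (Nat.cast_nonneg _ : 0 ≤ la)
    (by positivity : 0 < c / 4)
  obtain ⟨q, hq, hqgt⟩ := exists_bernoulliLogLik_gt hmb (Nat.cast_nonneg _ : 0 ≤ lb)
    (by positivity : 0 < c / 4)
  have hcp : c ≤ p := (div_le_div_of_nonneg_right (min_le_left _ _) zero_le_two).trans hp.1
  have hcq : c ≤ q := (div_le_div_of_nonneg_right (min_le_right _ _) zero_le_two).trans hq.1
  obtain ⟨D₀, hD₀, hD₀a, hD₀b, hD₀mem⟩ := exists_continuous_eqOn_closedBall hab p q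
  set r := dist a b / 3
  have hr : 0 < r := by have := dist_pos.2 hab; positivity
  refine ⟨r, hr, fun Y' hne hdist => ?_⟩
  have hclose : ∀ i, dist (Y' i) (Y i) < r := fun i => (dist_le_pi_dist Y' Y i).trans_lt hdist
  have hD₀Y : ∀ i, D₀ (Y' i) = D₀ (Y i) := fun i => by
    have hi := (hclose i).le
    rcases hY i with h | h <;> rw [h] at hi ⊢
    · rw [hD₀a hi, hD₀a (Metric.mem_closedBall_self hr.le)]
    · rw [hD₀b hi, hD₀b (Metric.mem_closedBall_self hr.le)]
  obtain ⟨j, hj⟩ := Function.ne_iff.1 hne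
  have hj_ab : Y' j ∉ ({a, b} : Set _) := by
    have hjr := hclose j
    have hrab : r < dist a b := by simp only [r]; linarith [dist_pos.2 hab]
    rintro (h' | h') <;> rcases hY j with h | h <;> rw [h, h'] at hjr hj <;>
      first | exact hj rfl | linarith [dist_comm a b]
  obtain ⟨D, hD, hD01, hgain⟩ := exists_sum_log_add_le hx hD₀ hc
    (fun u => (le_min hcp hcq).trans (hD₀mem u).1)
    (fun u => (hD₀mem u).2.trans_lt (max_lt hp.2 hq.2)) hD₀Y hj_ab
  have hn : (0 : ℝ) < n := Nat.cast_pos.2 j.pos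
  calc phiJS x Y = 1 / (2 * (n : ℝ)) * (maxBernoulliLogLik ma la + maxBernoulliLogLik mb lb) :=
        phiJS_eq hab hx hY hxa hxb
    _ < 1 / (2 * (n : ℝ)) * (bernoulliLogLik ma la p + bernoulliLogLik mb lb q + c / 2) :=
        mul_lt_mul_of_pos_left (by linarith) (by positivity)
    _ = 1 / (2 * (n : ℝ)) * (∑ i, (log (D₀ (x i)) + log (1 - D₀ (Y i))) + c / 2) := by
        rw [sum_log_eq_bernoulliLogLik hab hx hY, hD₀a (Metric.mem_closedBall_self hr.le),
          hD₀b (Metric.mem_closedBall_self hr.le)]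
    _ ≤ 1 / (2 * (n : ℝ)) * ∑ i, (log (D (x i)) + log (1 - D (Y' i))) := by gcongr
    _ ≤ phiJS x Y' := le_phiJS hD hD01

theorem neg_log_two_lt_phiJS (hab : a ≠ b) (hx : ∀ i, x i = a ∨ x i = b)
    (hY : ∀ i, Y i = a ∨ Y i = b) (hxa : a ∈ range x) (hxb : b ∈ range x)
    (hne : {i | x i = a}.ncard ≠ {i | Y i = a}.ncard) : -log 2 < phiJS x Y := by
  have hn : (0 : ℝ) < n := Nat.cast_pos.2 hxa.choose.pos
  set ma : ℝ := ({i | x i = a}.ncard : ℝ)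
  set la : ℝ := ({i | Y i = a}.ncard : ℝ)
  have hma : 0 < ma := Nat.cast_pos.2 ((ncard_pos).2 hxa)
  have hmb : (0 : ℝ) < {i | x i = b}.ncard := Nat.cast_pos.2 ((ncard_pos).2 hxb)
  have hcount : ∀ Z : Fin n → EuclideanSpace ℝ (Fin d), (∀ i, Z i = a ∨ Z i = b) →
      ({i | Z i = a}.ncard : ℝ) + {i | Z i = b}.ncard = n := fun Z hZ => by
    simpa using (sum_comp_eq_ncard_mul_add_ncard_mul hab hZ fun _ => (1 : ℝ)).symm
  have hhalf : ∀ m l : ℝ, bernoulliLogLik m l (1 / 2) = -(m + l) * log 2 := fun m l => by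
    rw [bernoulliLogLik, show (1 : ℝ) - 1 / 2 = 1 / 2 by norm_num, one_div, log_inv]
    ring
  have hA : bernoulliLogLik ma la (1 / 2) < maxBernoulliLogLik ma la := by
    refine bernoulliLogLik_lt_max hma (Nat.cast_nonneg _) ⟨by norm_num, by norm_num⟩ ?_
    rw [ne_eq, eq_div_iff (by positivity)]
    exact fun h => hne (Nat.cast_injective (R := ℝ) (by linarith : ma = la))
  have hB := bernoulliLogLik_le_max hmb (Nat.cast_nonneg {i | Y i = b}.ncard)
    (by norm_num : (1 / 2 : ℝ) ∈ Ioo 0 1)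
  rw [phiJS_eq hab hx hY hxa hxb]
  calc -log 2 = 1 / (2 * (n : ℝ)) * (bernoulliLogLik ma la (1 / 2) +
        bernoulliLogLik {i | x i = b}.ncard {i | Y i = b}.ncard (1 / 2)) := by
        rw [hhalf, hhalf]
        field_simp
        linarith [hcount x hx, hcount Y hY]
    _ < _ := mul_lt_mul_of_pos_left (add_lt_add_of_lt_of_le hA hB) (by positivity)

end JS

theorem stmt10_general {d n : ℕ} (hn : 1 ≤ n)
    (α : ℝ) (hα : 1 / 2 < α ∧ α < 1)
    (n1 : ℕ) (hn1 : (n1 : ℝ) = α * n)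
    (a b : EuclideanSpace ℝ (Fin d)) (hab : a ≠ b)
    (Yhat : Fin n → EuclideanSpace ℝ (Fin d))
    (hY : ∀ j, Yhat j = a ∨ Yhat j = b)
    (k : ℕ) (hk1 : Set.ncard {j : Fin n | Yhat j = a} = k) :
    (∃ ε > 0, ∀ Y : Fin n → EuclideanSpace ℝ (Fin d),
      Y ≠ Yhat → dist Y Yhat < ε →
      phiJS (fun i => if (i : ℕ) < n1 then a else b) Yhat
        < phiJS (fun i => if (i : ℕ) < n1 then a else b) Y) ∧
    (k ≠ n1 →
      -Real.log 2 < phiJS (fun i => if (i : ℕ) < n1 then a else b) Yhat) := by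
  set x : Fin n → EuclideanSpace ℝ (Fin d) := fun i => if (i : ℕ) < n1 then a else b
  have hnR : (1 : ℝ) ≤ n := by exact_mod_cast hn
  have hn1pos : 0 < n1 := by exact_mod_cast (show (0 : ℝ) < n1 by rw [hn1]; nlinarith)
  have hn1lt : n1 < n := by exact_mod_cast (show (n1 : ℝ) < n by rw [hn1]; nlinarith)
  have hx : ∀ i, x i = a ∨ x i = b := fun i => by by_cases h : (i : ℕ) < n1 <;> simp [x, h]
  have hxa : a ∈ range x := ⟨⟨0, by omega⟩, by simp [x, hn1pos]⟩
  have hxb : b ∈ range x := ⟨⟨n - 1, by omega⟩, by simp [x]; omega⟩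
  have hcard : {i | x i = a}.ncard = n1 := by
    have : {i | x i = a} = {i : Fin n | (i : ℕ) < n1} := by
      ext i; by_cases h : (i : ℕ) < n1 <;> simp [x, h, hab.symm]
    rw [this, Set.ncard_eq_toFinset_card', Set.toFinset_ofPred, Fin.card_filter_val_lt]
    omega
  exact ⟨exists_forall_phiJS_lt hab hx hY hxa hxb,
    fun hk => neg_log_two_lt_phiJS hab hx hY hxa hxb (by rw [hcard, hk1]; exact Ne.symm hk)⟩

theorem stmt10 {d n : ℕ} (hd : 1 ≤ d) (hn : 1 ≤ n)
    (α : ℝ) (hα : 1 / 2 < α ∧ α < 1)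
    (n1 : ℕ) (hn1 : (n1 : ℝ) = α * n)
    (a b : EuclideanSpace ℝ (Fin d)) (hab : a ≠ b)
    (Yhat : Fin n → EuclideanSpace ℝ (Fin d))
    (hY : ∀ j, Yhat j = a ∨ Yhat j = b)
    (k : ℕ) (hk1 : Set.ncard {j : Fin n | Yhat j = a} = k)
    (hk2 : Set.ncard {j : Fin n | Yhat j = b} = n - k) :
    (∃ ε > 0, ∀ Y : Fin n → EuclideanSpace ℝ (Fin d),
      Y ≠ Yhat → dist Y Yhat < ε →
      phiJS (fun i => if (i : ℕ) < n1 then a else b) Yhat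
        < phiJS (fun i => if (i : ℕ) < n1 then a else b) Y) ∧
    (k ≠ n1 →
      -Real.log 2 < phiJS (fun i => if (i : ℕ) < n1 then a else b) Yhat) :=
  stmt10_general hn α hα n1 hn1 a b hab Yhat hY k hk1
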